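/- arXiv:2104.02013 — 2 statements merged into one kernel-verified Lean document; each statement's English description precedes it below -/
import Mathlib

section
/- Let (X, P_X) and (Y, P_Y) be finite metric measure spaces equipped with m-pointed partitions, with μ_X and μ_Y fully supported. Suppose there exists a bijection φ: X → Y that is an isometry, is measure-preserving (μ_Y(φ(x)) = μ_X(x) for all x), and is compatible with the partitions, meaning there is a permutation σ of {1,…,m} such that φ(Uᵖ) = V^{σ(p)} and φ(xᵖ) = y^{σ(p)} for each p. Then d_qGW((X,P_X),(Y,P_Y)) = 0. -/
open Finset

noncomputable section

/-- A probability vector on a finite type. -/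
def IsProb {X : Type*} [Fintype X] (μ : X → ℝ) : Prop :=
  (∀ x, 0 ≤ μ x) ∧ (∑ x, μ x) = 1

/-- `μ` is a coupling of the probability vectors `μX` and `μY`. -/
def IsCoupling {X Y : Type*} [Fintype X] [Fintype Y]
    (μX : X → ℝ) (μY : Y → ℝ) (μ : X → Y → ℝ) : Prop :=
  (∀ x y, 0 ≤ μ x y) ∧ (∀ x, (∑ y, μ x y) = μX x) ∧ (∀ y, (∑ x, μ x y) = μY y)

/-- The Gromov–Wasserstein loss of a coupling, for given distance functions. -/
def GWLoss {X Y : Type*} [Fintype X] [Fintype Y]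
    (dX : X → X → ℝ) (dY : Y → Y → ℝ) (μ : X → Y → ℝ) : ℝ :=
  ∑ x, ∑ y, ∑ x', ∑ y', (dX x x' - dY y y') ^ 2 * μ x y * μ x' y'

/-- The Gromov–Wasserstein distance between two finite mm-spaces. -/
def dGW {X Y : Type*} [Fintype X] [Fintype Y]
    (dX : X → X → ℝ) (dY : Y → Y → ℝ) (μX : X → ℝ) (μY : Y → ℝ) : ℝ :=
  sInf {r : ℝ | ∃ μ, IsCoupling μX μY μ ∧ r = Real.sqrt (GWLoss dX dY μ)}

/-- An `m`-pointed partition of `X`: each point is assigned to one of `m` blocks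
(`part`), and each block `p` has a distinguished representative `rep p` lying in it.
Blocks are the fibers of `part`; they are disjoint, cover `X`, and are nonempty. -/
structure PointedPartition (X : Type*) (m : ℕ) where
  part : X → Fin m
  rep : Fin m → X
  part_rep : ∀ p, part (rep p) = p

/-- The mass `μ_X(Uᵖ)` of the block `Uᵖ`; as a function of `p` this is the measure
`μ_{P_X}` of the quantized representation `Xᵐ` (identified with `Fin m`). -/
def blockMass {X : Type*} [Fintype X] (μX : X → ℝ) {m : ℕ}
    (P : PointedPartition X m) (p : Fin m) : ℝ :=
  ∑ x, if P.part x = p then μX x else 0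

/-- The normalized measure `μ_{Uᵖ} = μ_X|_{Uᵖ} / μ_X(Uᵖ)` of a block, extended by zero
to all of `X` (this is `μ̄_{Uᵖ}`). -/
def blockMeasure {X : Type*} [Fintype X] (μX : X → ℝ) {m : ℕ}
    (P : PointedPartition X m) (p : Fin m) (x : X) : ℝ :=
  if P.part x = p then μX x / blockMass μX P p else 0

/-- `μ` is a quantization coupling: `μ(x,y) = Σ_{p,q} μm(xᵖ,y^q) μ̄_{xᵖ,y^q}(x,y)` where
`μm` couples the quantized measures and each `ν p q` is (the extension by zero of) a
coupling of the block measures with `ν p q (xᵖ, y^q) > 0`. -/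
def IsQuantCoupling {X Y : Type*} [Fintype X] [Fintype Y] {m : ℕ}
    (μX : X → ℝ) (μY : Y → ℝ)
    (PX : PointedPartition X m) (PY : PointedPartition Y m)
    (μ : X → Y → ℝ) : Prop :=
  ∃ (μm : Fin m → Fin m → ℝ) (ν : Fin m → Fin m → X → Y → ℝ),
    IsCoupling (blockMass μX PX) (blockMass μY PY) μm ∧
    (∀ p q, IsCoupling (blockMeasure μX PX p) (blockMeasure μY PY q) (ν p q)) ∧
    (∀ p q, 0 < ν p q (PX.rep p) (PY.rep q)) ∧
    (∀ x y, μ x y = ∑ p, ∑ q, μm p q * ν p q x y)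

/-- The quantized Gromov–Wasserstein distance between `m`-pointed mm-spaces. -/
def dqGW {X Y : Type*} [Fintype X] [Fintype Y] {m : ℕ}
    (dX : X → X → ℝ) (dY : Y → Y → ℝ) (μX : X → ℝ) (μY : Y → ℝ)
    (PX : PointedPartition X m) (PY : PointedPartition Y m) : ℝ :=
  sInf {r : ℝ | ∃ μ, IsQuantCoupling μX μY PX PY μ ∧ r = Real.sqrt (GWLoss dX dY μ)}

/-- The quantized eccentricity `q(P_X) = (Σ_p μ_X(Uᵖ) s_{Uᵖ}(xᵖ)²)^{1/2}`, where
`s_{Uᵖ}(xᵖ)² = Σ_{x ∈ Uᵖ} d_X(xᵖ,x)² μ_{Uᵖ}(x)`. -/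
def qEcc {X : Type*} [Fintype X] (dX : X → X → ℝ) (μX : X → ℝ) {m : ℕ}
    (P : PointedPartition X m) : ℝ :=
  Real.sqrt (∑ p, blockMass μX P p * ∑ x, dX (P.rep p) x ^ 2 * blockMeasure μX P p x)

/-- The `m`-quantized eccentricity `q_m(X)`: minimum of `q(P_X)` over `m`-pointed
partitions. -/
def qEccMin (X : Type*) [Fintype X] (dX : X → X → ℝ) (μX : X → ℝ) (m : ℕ) : ℝ :=
  sInf {r : ℝ | ∃ P : PointedPartition X m, r = qEcc dX μX P}

end

/-
Transport the identity coupling along `φ`: the graph of `φ` carries `μ_X` to `μ_Y` and has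
zero distortion. It is a quantization coupling because its quantized part is the graph of `σ`
and its block parts are the graphs of `φ` restricted to `Uᵖ → V^{σ p}`; the off-diagonal block
couplings `ν p q`, `q ≠ σ p`, are weighted by zero, so the independent coupling, which charges
`(xᵖ, y^q)`, can be used there.
-/

section Coupling

variable {X Y : Type*} [Fintype X] [Fintype Y]

def graphCoupling [DecidableEq Y] (e : X ≃ Y) (μX : X → ℝ) (x : X) (y : Y) : ℝ :=
  if e x = y then μX x else 0

theorem isCoupling_graphCoupling [DecidableEq Y] {μX : X → ℝ} {μY : Y → ℝ} (e : X ≃ Y)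
    (h0 : ∀ x, 0 ≤ μX x) (he : ∀ x, μY (e x) = μX x) :
    IsCoupling μX μY (graphCoupling e μX) := by
  refine ⟨fun x y => ?_, fun x => ?_, fun y => ?_⟩
  · unfold graphCoupling
    split_ifs
    exacts [h0 x, le_rfl]
  · simp [graphCoupling]
  · rw [← e.symm.sum_comp]
    simp [graphCoupling, ← he]

theorem isCoupling_mul {μX : X → ℝ} {μY : Y → ℝ} (hX : IsProb μX) (hY : IsProb μY) :
    IsCoupling μX μY (fun x y => μX x * μY y) :=
  ⟨fun x y => mul_nonneg (hX.1 x) (hY.1 y),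
    fun x => by rw [← mul_sum, hY.2, mul_one],
    fun y => by rw [← sum_mul, hX.2, one_mul]⟩

theorem GWLoss_graphCoupling_eq_zero [DecidableEq Y] {dX : X → X → ℝ} {dY : Y → Y → ℝ}
    (e : X ≃ Y) (he : ∀ x x', dY (e x) (e x') = dX x x') (μX : X → ℝ) :
    GWLoss dX dY (graphCoupling e μX) = 0 := by
  refine sum_eq_zero fun x _ => sum_eq_zero fun y _ => sum_eq_zero fun x' _ =>
    sum_eq_zero fun y' _ => ?_
  unfold graphCoupling
  split_ifs with h h'
  · simp [← h, ← h', he]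
  all_goals simp

end Coupling

section Blocks

variable {X : Type*} [Fintype X] {μX : X → ℝ} {m : ℕ} (P : PointedPartition X m)

theorem blockMass_pos (hpos : ∀ x, 0 < μX x) (p : Fin m) : 0 < blockMass μX P p :=
  calc 0 < μX (P.rep p) := hpos _
    _ = if P.part (P.rep p) = p then μX (P.rep p) else 0 := by rw [if_pos (P.part_rep p)]
    _ ≤ blockMass μX P p :=
      single_le_sum (f := fun x => if P.part x = p then μX x else 0)
        (fun x _ => by split_ifs; exacts [(hpos x).le, le_rfl]) (mem_univ _)

theorem blockMeasure_rep_pos (hpos : ∀ x, 0 < μX x) (p : Fin m) :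
    0 < blockMeasure μX P p (P.rep p) := by
  rw [blockMeasure, if_pos (P.part_rep p)]
  exact div_pos (hpos _) (blockMass_pos P hpos p)

theorem isProb_blockMeasure (hpos : ∀ x, 0 < μX x) (p : Fin m) :
    IsProb (blockMeasure μX P p) := by
  have hM := blockMass_pos P hpos p
  refine ⟨fun x => ?_, ?_⟩
  · unfold blockMeasure
    split_ifs
    exacts [div_nonneg (hpos x).le hM.le, le_rfl]
  · simp_rw [blockMeasure, div_eq_mul_inv, ← ite_zero_mul, ← sum_mul]
    exact mul_inv_cancel₀ hM.ne'

theorem sum_blockMass_mul_blockMeasure (hpos : ∀ x, 0 < μX x) (x : X) :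
    ∑ p, blockMass μX P p * blockMeasure μX P p x = μX x := by
  rw [sum_eq_single_of_mem (P.part x) (mem_univ _), blockMeasure, if_pos rfl,
    mul_div_cancel₀ _ (blockMass_pos P hpos _).ne']
  intro q _ hq
  rw [blockMeasure, if_neg (Ne.symm hq), mul_zero]

variable {Y : Type*} [Fintype Y] {μY : Y → ℝ} {Q : PointedPartition Y m}
  {φ : X ≃ Y} {σ : Equiv.Perm (Fin m)}

theorem blockMass_transport (hmeas : ∀ x, μY (φ x) = μX x)
    (hblocks : ∀ x, Q.part (φ x) = σ (P.part x)) (p : Fin m) :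
    blockMass μY Q (σ p) = blockMass μX P p := by
  rw [blockMass, ← φ.sum_comp]
  simp_rw [hblocks, hmeas, σ.injective.eq_iff]
  rfl

theorem blockMeasure_transport (hmeas : ∀ x, μY (φ x) = μX x)
    (hblocks : ∀ x, Q.part (φ x) = σ (P.part x)) (p : Fin m) (x : X) :
    blockMeasure μY Q (σ p) (φ x) = blockMeasure μX P p x := by
  simp_rw [blockMeasure, blockMass_transport P hmeas hblocks, hblocks, hmeas,
    σ.injective.eq_iff]

end Blocks

theorem isQuantCoupling_graphCoupling {X Y : Type*} [Fintype X] [Fintype Y] [DecidableEq Y]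
    {m : ℕ} {μX : X → ℝ} {μY : Y → ℝ} (hXpos : ∀ x, 0 < μX x) (hYpos : ∀ y, 0 < μY y)
    (PX : PointedPartition X m) (PY : PointedPartition Y m)
    (φ : X ≃ Y) (σ : Equiv.Perm (Fin m)) (hmeas : ∀ x, μY (φ x) = μX x)
    (hblocks : ∀ x, PY.part (φ x) = σ (PX.part x))
    (hreps : ∀ p, φ (PX.rep p) = PY.rep (σ p)) :
    IsQuantCoupling μX μY PX PY (graphCoupling φ μX) := by
  set ν : Fin m → Fin m → X → Y → ℝ := fun p q =>
    if σ p = q then graphCoupling φ (blockMeasure μX PX p)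
    else fun x y => blockMeasure μX PX p x * blockMeasure μY PY q y with hν
  refine ⟨graphCoupling σ (blockMass μX PX), ν,
    isCoupling_graphCoupling σ (fun p => (blockMass_pos PX hXpos p).le)
      (blockMass_transport PX hmeas hblocks), fun p q => ?_, fun p q => ?_, fun x y => ?_⟩
  · simp only [hν]
    split_ifs with h
    · subst h
      exact isCoupling_graphCoupling φ (isProb_blockMeasure PX hXpos p).1
        (blockMeasure_transport PX hmeas hblocks p)
    · exact isCoupling_mul (isProb_blockMeasure PX hXpos p) (isProb_blockMeasure PY hYpos q)
  · simp only [hν]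
    split_ifs with h
    · rw [graphCoupling, if_pos (by rw [hreps, h])]
      exact blockMeasure_rep_pos PX hXpos p
    · exact mul_pos (blockMeasure_rep_pos PX hXpos p) (blockMeasure_rep_pos PY hYpos q)
  · have hdiag : ∀ p, ∑ q, graphCoupling σ (blockMass μX PX) p q * ν p q x y =
        blockMass μX PX p * graphCoupling φ (blockMeasure μX PX p) x y := fun p => by
      simp [graphCoupling, hν]
    simp_rw [hdiag, graphCoupling, mul_ite, mul_zero, sum_ite_irrel, sum_const_zero,
      sum_blockMass_mul_blockMeasure PX hXpos]

section dqGW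

variable {X Y : Type*} [Fintype X] [Fintype Y] {m : ℕ} {dX : X → X → ℝ} {dY : Y → Y → ℝ}
  {μX : X → ℝ} {μY : Y → ℝ} {PX : PointedPartition X m} {PY : PointedPartition Y m}

theorem dqGW_nonneg : 0 ≤ dqGW dX dY μX μY PX PY :=
  Real.sInf_nonneg fun _ ⟨_, _, hr⟩ => hr ▸ Real.sqrt_nonneg _

theorem dqGW_le_sqrt_GWLoss {μ : X → Y → ℝ} (hμ : IsQuantCoupling μX μY PX PY μ) :
    dqGW dX dY μX μY PX PY ≤ Real.sqrt (GWLoss dX dY μ) :=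
  csInf_le ⟨0, fun _ ⟨_, _, hr⟩ => hr ▸ Real.sqrt_nonneg _⟩ ⟨μ, hμ, rfl⟩

end dqGW

theorem dqGW_eq_zero_of_pointed_isomorphism_general
    {X Y : Type*} [Fintype X] [Fintype Y] [MetricSpace X] [MetricSpace Y] {m : ℕ}
    (μX : X → ℝ) (μY : Y → ℝ)
    (hXpos : ∀ x, 0 < μX x)
    (PX : PointedPartition X m) (PY : PointedPartition Y m)
    (φ : X ≃ Y) (σ : Equiv.Perm (Fin m))
    (hiso : ∀ x x', dist (φ x) (φ x') = dist x x')
    (hmeas : ∀ x, μY (φ x) = μX x)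
    (hblocks : ∀ x, PY.part (φ x) = σ (PX.part x))
    (hreps : ∀ p, φ (PX.rep p) = PY.rep (σ p)) :
    dqGW (fun x x' => dist x x') (fun y y' => dist y y') μX μY PX PY = 0 := by
  classical
  have hYpos : ∀ y, 0 < μY y := fun y => by
    simpa only [← hmeas, φ.apply_symm_apply] using hXpos (φ.symm y)
  have hquant := isQuantCoupling_graphCoupling hXpos hYpos PX PY φ σ hmeas hblocks hreps
  refine le_antisymm ?_ dqGW_nonneg
  calc _ ≤ √(GWLoss _ _ (graphCoupling φ μX)) := dqGW_le_sqrt_GWLoss hquant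
    _ = 0 := by rw [GWLoss_graphCoupling_eq_zero φ hiso μX, Real.sqrt_zero]

/-- a partition-compatible measure-preserving isometric bijection forces
the quantized GW distance to vanish. -/
theorem dqGW_eq_zero_of_pointed_isomorphism
    {X Y : Type*} [Fintype X] [Fintype Y] [MetricSpace X] [MetricSpace Y] {m : ℕ}
    (μX : X → ℝ) (μY : Y → ℝ) (hμX : IsProb μX) (hμY : IsProb μY)
    (hXpos : ∀ x, 0 < μX x) (hYpos : ∀ y, 0 < μY y)
    (PX : PointedPartition X m) (PY : PointedPartition Y m)
    (φ : X ≃ Y) (σ : Equiv.Perm (Fin m))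
    (hiso : ∀ x x', dist (φ x) (φ x') = dist x x')
    (hmeas : ∀ x, μY (φ x) = μX x)
    (hblocks : ∀ x, PY.part (φ x) = σ (PX.part x))
    (hreps : ∀ p, φ (PX.rep p) = PY.rep (σ p)) :
    dqGW (fun x x' => dist x x') (fun y y' => dist y y') μX μY PX PY = 0 :=
  dqGW_eq_zero_of_pointed_isomorphism_general μX μY hXpos PX PY φ σ hiso hmeas hblocks hreps
end

section
/- Let X and Y be finite metric measure spaces and m ≥ 1 with m ≤ |X| and m ≤ |Y|. Then min over m-pointed partitions P_X of X and P_Y of Y of |d_GW(X, Y) − d_GW(Xᵐ, Yᵐ)| is at most 2(q_m(X) + q_m(Y)), where Xᵐ and Yᵐ are the quantized representations determined by P_X and P_Y. -/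
open Finset

/-!
Write `π = rep ∘ part`. The quantized spaces have the same Gromov–Wasserstein distance as `X` and
`Y` with the pulled-back distances `d(π x, π x')`: couplings push forward along the block maps,
and a coupling of the block masses lifts back by spreading each entry over the product of its
two blocks proportionally to `μ_X` and `μ_Y`. For a fixed coupling `μ`, `√GW(μ)` is an
`L²(μ ⊗ μ)` norm, so by Minkowski, changing the distances changes it by at most the
`L²(μ_X ⊗ μ_X)` distance between the two distance functions on `X`, plus the same quantity on
`Y`. Finally `|d(x, x') - d(π x, π x')| ≤ d(x, π x) + d(x', π x')`, whose `L²(μ_X ⊗ μ_X)` norm is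
at most `2 q(P_X)`.
-/

section WeightedL2

variable {ι : Type*} [Fintype ι] {w : ι → ℝ}

noncomputable def weightedL2 (w f : ι → ℝ) : ℝ := √(∑ i, w i * f i ^ 2)

lemma weightedL2_eq_norm (hw : ∀ i, 0 ≤ w i) (f : ι → ℝ) :
    weightedL2 w f = ‖WithLp.toLp 2 (fun i => √(w i) * f i)‖ := by
  simp [weightedL2, EuclideanSpace.norm_eq, mul_pow, Real.sq_sqrt (hw _)]

lemma weightedL2_add_le (hw : ∀ i, 0 ≤ w i) (f g : ι → ℝ) :
    weightedL2 w (f + g) ≤ weightedL2 w f + weightedL2 w g := by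
  simp only [weightedL2_eq_norm hw, Pi.add_apply, mul_add]
  exact norm_add_le (WithLp.toLp 2 fun i => √(w i) * f i) (WithLp.toLp 2 fun i => √(w i) * g i)

lemma weightedL2_sub_le (hw : ∀ i, 0 ≤ w i) (f g : ι → ℝ) :
    weightedL2 w (f - g) ≤ weightedL2 w f + weightedL2 w g := by
  simp only [weightedL2_eq_norm hw, Pi.sub_apply, mul_sub]
  exact norm_sub_le (WithLp.toLp 2 fun i => √(w i) * f i) (WithLp.toLp 2 fun i => √(w i) * g i)

lemma abs_weightedL2_sub_weightedL2_le (hw : ∀ i, 0 ≤ w i) (f g : ι → ℝ) :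
    |weightedL2 w f - weightedL2 w g| ≤ weightedL2 w (f - g) := by
  simp only [weightedL2_eq_norm hw, Pi.sub_apply, mul_sub]
  exact abs_norm_sub_norm_le (WithLp.toLp 2 fun i => √(w i) * f i)
    (WithLp.toLp 2 fun i => √(w i) * g i)

lemma weightedL2_le_of_abs_le (hw : ∀ i, 0 ≤ w i) {f g : ι → ℝ} (h : ∀ i, |f i| ≤ g i) :
    weightedL2 w f ≤ weightedL2 w g :=
  Real.sqrt_le_sqrt <| sum_le_sum fun i _ => mul_le_mul_of_nonneg_left
    (sq_le_sq' (neg_le_of_abs_le (h i)) (le_of_abs_le (h i))) (hw i)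

lemma weightedL2_comp_fst {α β : Type*} [Fintype α] [Fintype β] {w : α × β → ℝ} {v : α → ℝ}
    (hw : ∀ a, ∑ b, w (a, b) = v a) (f : α → ℝ) :
    weightedL2 w (fun p => f p.1) = weightedL2 v f := by
  simp only [weightedL2, Fintype.sum_prod_type, ← sum_mul, hw]

lemma weightedL2_comp_snd {α β : Type*} [Fintype α] [Fintype β] {w : α × β → ℝ} {v : β → ℝ}
    (hw : ∀ b, ∑ a, w (a, b) = v b) (f : β → ℝ) :
    weightedL2 w (fun p => f p.2) = weightedL2 v f := by
  simp only [weightedL2, Fintype.sum_prod_type_right, ← sum_mul, hw]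

end WeightedL2

section Couplings

variable {A B : Type*} [Fintype A] [Fintype B] {α : A → ℝ} {β : B → ℝ} {ν : A → B → ℝ}

lemma IsCoupling.mul_div_self_left (hν : IsCoupling α β ν) (a : A) (b : B) :
    ν a b * (α a / α a) = ν a b := by
  rcases eq_or_ne (α a) 0 with h | h
  · have hle : ν a b ≤ α a := hν.2.1 a ▸ single_le_sum (fun b' _ => hν.1 a b') (mem_univ b)
    simp [le_antisymm (h ▸ hle) (hν.1 a b)]
  · rw [div_self h, mul_one]

lemma IsCoupling.mul_div_self_right (hν : IsCoupling α β ν) (a : A) (b : B) :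
    ν a b * (β b / β b) = ν a b := by
  rcases eq_or_ne (β b) 0 with h | h
  · have hle : ν a b ≤ β b := hν.2.2 b ▸ single_le_sum (fun a' _ => hν.1 a' b) (mem_univ a)
    simp [le_antisymm (h ▸ hle) (hν.1 a b)]
  · rw [div_self h, mul_one]

lemma isCoupling_mul_s12 (hα : IsProb α) (hβ : IsProb β) : IsCoupling α β (fun a b => α a * β b) :=
  ⟨fun a b => mul_nonneg (hα.1 a) (hβ.1 b), fun a => by rw [← mul_sum, hβ.2, mul_one],
    fun b => by rw [← sum_mul, hα.2, one_mul]⟩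

end Couplings

section Pushforward

variable {X Y A B : Type*} [Fintype X] [Fintype Y] [DecidableEq A] [DecidableEq B]

def mapMeasure (f : X → A) (μX : X → ℝ) (a : A) : ℝ :=
  ∑ x, if f x = a then μX x else 0

def mapCoupling (f : X → A) (g : Y → B) (μ : X → Y → ℝ) (a : A) (b : B) : ℝ :=
  ∑ x, ∑ y, if f x = a ∧ g y = b then μ x y else 0

variable {f : X → A} {g : Y → B} {μX : X → ℝ} {μY : Y → ℝ} {μ : X → Y → ℝ}

lemma mapMeasure_nonneg (hμ : ∀ x, 0 ≤ μX x) (a : A) : 0 ≤ mapMeasure f μX a :=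
  sum_nonneg fun x _ => by split_ifs <;> simp [hμ x]

lemma div_mapMeasure_mul_mapMeasure (hμ : ∀ x, 0 ≤ μX x) (x : X) :
    μX x / mapMeasure f μX (f x) * mapMeasure f μX (f x) = μX x := by
  rcases eq_or_ne (mapMeasure f μX (f x)) 0 with h | h
  · have hle : μX x ≤ mapMeasure f μX (f x) := by
      simpa [mapMeasure] using single_le_sum (f := fun x' => if f x' = f x then μX x' else 0)
        (fun x' _ => by split_ifs <;> simp [hμ x']) (mem_univ x)
    simp [h, le_antisymm (h ▸ hle) (hμ x)]
  · exact div_mul_cancel₀ _ h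

lemma mapMeasure_div_mapMeasure (a : A) :
    mapMeasure f (fun x => μX x / mapMeasure f μX (f x)) a =
      mapMeasure f μX a / mapMeasure f μX a := by
  rw [mapMeasure, mapMeasure, sum_div]
  refine Finset.sum_congr rfl fun x _ => ?_
  split_ifs with h
  · rw [h]; rfl
  · simp

lemma mapCoupling_mul_mul (φ : A → B → ℝ) (u : X → ℝ) (v : Y → ℝ) (a : A) (b : B) :
    mapCoupling f g (fun x y => φ (f x) (g y) * u x * v y) a b =
      φ a b * mapMeasure f u a * mapMeasure g v b := by
  rw [mapCoupling, mapMeasure, mapMeasure, mul_sum _ _ (φ a b), sum_mul_sum]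
  refine Finset.sum_congr rfl fun x _ => Finset.sum_congr rfl fun y _ => ?_
  by_cases hx : f x = a <;> by_cases hy : g y = b <;> simp [hx, hy]

variable [Fintype A] [Fintype B]

lemma IsCoupling.map (hμ : IsCoupling μX μY μ) (f : X → A) (g : Y → B) :
    IsCoupling (mapMeasure f μX) (mapMeasure g μY) (mapCoupling f g μ) := by
  refine ⟨fun a b => sum_nonneg fun x _ => sum_nonneg fun y _ => ?_, fun a => ?_, fun b => ?_⟩
  · split_ifs <;> simp [hμ.1 x y]
  · simp only [mapCoupling, mapMeasure, ite_and]
    simp_rw [sum_comm (s := (univ : Finset B))]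
    simp [← hμ.2.1]
  · simp only [mapCoupling, mapMeasure, ite_and]
    simp_rw [sum_comm (s := (univ : Finset A))]
    simp only [sum_ite_eq, mem_univ, if_true]
    rw [sum_comm]
    simp [← hμ.2.2]

lemma sum_mul_mapMeasure (φ : A → ℝ) :
    ∑ a, φ a * mapMeasure f μX a = ∑ x, φ (f x) * μX x := by
  simp only [mapMeasure, mul_sum, mul_ite, mul_zero]
  rw [sum_comm]
  simp

lemma sum_mul_mapCoupling (φ : A → B → ℝ) :
    ∑ a, ∑ b, φ a b * mapCoupling f g μ a b = ∑ x, ∑ y, φ (f x) (g y) * μ x y := by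
  simp only [mapCoupling, mul_sum, mul_ite, mul_zero, ite_and]
  simp_rw [sum_comm (s := (univ : Finset A)), sum_comm (s := (univ : Finset B))]
  simp

lemma GWLoss_eq_sum_sum_mul (dX : X → X → ℝ) (dY : Y → Y → ℝ) (μ : X → Y → ℝ) :
    GWLoss dX dY μ = ∑ x, ∑ y, (∑ x', ∑ y', (dX x x' - dY y y') ^ 2 * μ x' y') * μ x y := by
  simp only [GWLoss, sum_mul]
  exact Finset.sum_congr rfl fun x _ => Finset.sum_congr rfl fun y _ =>
    Finset.sum_congr rfl fun x' _ => Finset.sum_congr rfl fun y' _ => mul_right_comm _ _ _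

lemma GWLoss_comp (dA : A → A → ℝ) (dB : B → B → ℝ) (μ : X → Y → ℝ) :
    GWLoss (fun x x' => dA (f x) (f x')) (fun y y' => dB (g y) (g y')) μ =
      GWLoss dA dB (mapCoupling f g μ) := by
  simp only [GWLoss_eq_sum_sum_mul, sum_mul_mapCoupling (fun a' b' => (dA _ a' - dB _ b') ^ 2)]
  exact (sum_mul_mapCoupling
    (fun a b => ∑ x', ∑ y', (dA a (f x') - dB b (g y')) ^ 2 * μ x' y')).symm

end Pushforward

section Lift

variable {X Y A B : Type*} [Fintype X] [Fintype Y] [Fintype A] [Fintype B]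
  [DecidableEq A] [DecidableEq B] {f : X → A} {g : Y → B} {μX : X → ℝ} {μY : Y → ℝ}
  {ν : A → B → ℝ}

/-- Blocks of zero mass carry no mass of `ν`, so the convention `t / 0 = 0` is harmless here. -/
noncomputable def liftCoupling (f : X → A) (g : Y → B) (μX : X → ℝ) (μY : Y → ℝ)
    (ν : A → B → ℝ) (x : X) (y : Y) : ℝ :=
  ν (f x) (g y) * (μX x / mapMeasure f μX (f x)) * (μY y / mapMeasure g μY (g y))

lemma mapCoupling_liftCoupling (hν : IsCoupling (mapMeasure f μX) (mapMeasure g μY) ν) :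
    mapCoupling f g (liftCoupling f g μX μY ν) = ν := by
  funext a b
  unfold liftCoupling
  rw [mapCoupling_mul_mul, mapMeasure_div_mapMeasure, mapMeasure_div_mapMeasure,
    hν.mul_div_self_left, hν.mul_div_self_right]

lemma isCoupling_liftCoupling (hμX : ∀ x, 0 ≤ μX x) (hμY : ∀ y, 0 ≤ μY y)
    (hν : IsCoupling (mapMeasure f μX) (mapMeasure g μY) ν) :
    IsCoupling μX μY (liftCoupling f g μX μY ν) := by
  refine ⟨fun x y => ?_, fun x => ?_, fun y => ?_⟩
  · exact mul_nonneg (mul_nonneg (hν.1 _ _) (div_nonneg (hμX x) (mapMeasure_nonneg hμX _)))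
      (div_nonneg (hμY y) (mapMeasure_nonneg hμY _))
  · calc ∑ y, liftCoupling f g μX μY ν x y
        = μX x / mapMeasure f μX (f x) *
            ∑ y, ν (f x) (g y) * (μY y / mapMeasure g μY (g y)) := by
          simp only [liftCoupling, mul_sum]; exact Finset.sum_congr rfl fun y _ => by ring
      _ = μX x / mapMeasure f μX (f x) * mapMeasure f μX (f x) := by
          rw [← sum_mul_mapMeasure, ← hν.2.1]
          simp only [mapMeasure_div_mapMeasure, hν.mul_div_self_right]
      _ = μX x := div_mapMeasure_mul_mapMeasure hμX x
  · calc ∑ x, liftCoupling f g μX μY ν x y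
        = μY y / mapMeasure g μY (g y) *
            ∑ x, ν (f x) (g y) * (μX x / mapMeasure f μX (f x)) := by
          simp only [liftCoupling, mul_sum]; exact Finset.sum_congr rfl fun x _ => by ring
      _ = μY y / mapMeasure g μY (g y) * mapMeasure g μY (g y) := by
          rw [← sum_mul_mapMeasure (fun a => ν a (g y)), ← hν.2.2]
          simp only [mapMeasure_div_mapMeasure, hν.mul_div_self_left]
      _ = μY y := div_mapMeasure_mul_mapMeasure hμY y

end Lift

section GromovWasserstein

variable {X Y : Type*} [Fintype X] [Fintype Y] {μX : X → ℝ} {μY : Y → ℝ}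

lemma sqrt_GWLoss_eq_weightedL2 (dX : X → X → ℝ) (dY : Y → Y → ℝ) (μ : X → Y → ℝ) :
    √(GWLoss dX dY μ) =
      weightedL2 (fun q : (X × X) × (Y × Y) => μ q.1.1 q.2.1 * μ q.1.2 q.2.2)
        (fun q => dX q.1.1 q.1.2 - dY q.2.1 q.2.2) := by
  simp only [weightedL2, GWLoss, Fintype.sum_prod_type]
  congr 1
  refine Finset.sum_congr rfl fun x _ => ?_
  rw [sum_comm]
  exact Finset.sum_congr rfl fun x' _ => Finset.sum_congr rfl fun y _ =>
    Finset.sum_congr rfl fun y' _ => by ring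

lemma abs_sqrt_GWLoss_sub_le {μ : X → Y → ℝ} (hμ : IsCoupling μX μY μ)
    (dX dX' : X → X → ℝ) (dY dY' : Y → Y → ℝ) :
    |√(GWLoss dX dY μ) - √(GWLoss dX' dY' μ)| ≤
      weightedL2 (fun p : X × X => μX p.1 * μX p.2) (fun p => dX p.1 p.2 - dX' p.1 p.2) +
        weightedL2 (fun p : Y × Y => μY p.1 * μY p.2) (fun p => dY p.1 p.2 - dY' p.1 p.2) := by
  set W := fun q : (X × X) × (Y × Y) => μ q.1.1 q.2.1 * μ q.1.2 q.2.2
  have hW : ∀ q, 0 ≤ W q := fun q => mul_nonneg (hμ.1 _ _) (hμ.1 _ _)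
  have hWX : ∀ p : X × X, ∑ q : Y × Y, W (p, q) = μX p.1 * μX p.2 := fun p => by
    simp only [W, Fintype.sum_prod_type, ← sum_mul_sum, hμ.2.1]
  have hWY : ∀ q : Y × Y, ∑ p : X × X, W (p, q) = μY q.1 * μY q.2 := fun q => by
    simp only [W, Fintype.sum_prod_type, ← sum_mul_sum, hμ.2.2]
  rw [sqrt_GWLoss_eq_weightedL2, sqrt_GWLoss_eq_weightedL2,
    ← weightedL2_comp_fst hWX, ← weightedL2_comp_snd hWY]
  calc _ ≤ weightedL2 W ((fun q => dX q.1.1 q.1.2 - dY q.2.1 q.2.2) -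
        fun q => dX' q.1.1 q.1.2 - dY' q.2.1 q.2.2) := abs_weightedL2_sub_weightedL2_le hW _ _
    _ = weightedL2 W ((fun q => dX q.1.1 q.1.2 - dX' q.1.1 q.1.2) -
        fun q => dY q.2.1 q.2.2 - dY' q.2.1 q.2.2) := by
      congr 1; funext q; simp only [Pi.sub_apply]; ring
    _ ≤ _ := weightedL2_sub_le hW _ _

lemma dGW_le_sqrt_GWLoss (dX : X → X → ℝ) (dY : Y → Y → ℝ) {μ : X → Y → ℝ}
    (hμ : IsCoupling μX μY μ) : dGW dX dY μX μY ≤ √(GWLoss dX dY μ) :=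
  csInf_le ⟨0, by rintro r ⟨μ', -, rfl⟩; exact Real.sqrt_nonneg _⟩ ⟨μ, hμ, rfl⟩

lemma dGW_le_dGW_add {dX dX' : X → X → ℝ} {dY dY' : Y → Y → ℝ} {c : ℝ}
    (h₀ : ∃ μ, IsCoupling μX μY μ)
    (h : ∀ μ, IsCoupling μX μY μ → √(GWLoss dX dY μ) ≤ √(GWLoss dX' dY' μ) + c) :
    dGW dX dY μX μY ≤ dGW dX' dY' μX μY + c := by
  rw [← sub_le_iff_le_add]
  obtain ⟨μ₀, hμ₀⟩ := h₀
  refine le_csInf ⟨_, μ₀, hμ₀, rfl⟩ ?_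
  rintro r ⟨μ, hμ, rfl⟩
  exact sub_le_iff_le_add.2 ((dGW_le_sqrt_GWLoss dX dY hμ).trans (h μ hμ))

lemma abs_dGW_sub_dGW_le (hμX : IsProb μX) (hμY : IsProb μY)
    (dX dX' : X → X → ℝ) (dY dY' : Y → Y → ℝ) :
    |dGW dX dY μX μY - dGW dX' dY' μX μY| ≤
      weightedL2 (fun p : X × X => μX p.1 * μX p.2) (fun p => dX p.1 p.2 - dX' p.1 p.2) +
        weightedL2 (fun p : Y × Y => μY p.1 * μY p.2) (fun p => dY p.1 p.2 - dY' p.1 p.2) := by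
  have h₀ : ∃ μ, IsCoupling μX μY μ := ⟨_, isCoupling_mul_s12 hμX hμY⟩
  have h := fun μ (hμ : IsCoupling μX μY μ) =>
    abs_sub_le_iff.1 (abs_sqrt_GWLoss_sub_le hμ dX dX' dY dY')
  rw [abs_sub_le_iff, sub_le_iff_le_add', sub_le_iff_le_add']
  exact ⟨dGW_le_dGW_add h₀ fun μ hμ => sub_le_iff_le_add'.1 (h μ hμ).1,
    dGW_le_dGW_add h₀ fun μ hμ => sub_le_iff_le_add'.1 (h μ hμ).2⟩

lemma dGW_comp_eq {A B : Type*} [Fintype A] [Fintype B] [DecidableEq A] [DecidableEq B]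
    (hμX : ∀ x, 0 ≤ μX x) (hμY : ∀ y, 0 ≤ μY y) (f : X → A) (g : Y → B)
    (dA : A → A → ℝ) (dB : B → B → ℝ) :
    dGW (fun x x' => dA (f x) (f x')) (fun y y' => dB (g y) (g y')) μX μY =
      dGW dA dB (mapMeasure f μX) (mapMeasure g μY) := by
  unfold dGW
  congr 1
  ext r
  constructor
  · rintro ⟨μ, hμ, rfl⟩
    exact ⟨_, hμ.map f g, by rw [GWLoss_comp]⟩
  · rintro ⟨ν, hν, rfl⟩
    refine ⟨_, isCoupling_liftCoupling hμX hμY hν, ?_⟩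
    rw [GWLoss_comp (f := f) (g := g), mapCoupling_liftCoupling hν]

end GromovWasserstein

lemma blockMass_eq_mapMeasure {X : Type*} [Fintype X] {m : ℕ} (μX : X → ℝ)
    (P : PointedPartition X m) : blockMass μX P = mapMeasure P.part μX :=
  rfl

section Eccentricity

variable {X : Type*} [Fintype X] [PseudoMetricSpace X] {μX : X → ℝ} {m : ℕ}

lemma qEcc_eq_weightedL2 (hμ : ∀ x, 0 ≤ μX x) (P : PointedPartition X m) :
    qEcc (fun x x' => dist x x') μX P = weightedL2 μX (fun x => dist x (P.rep (P.part x))) := by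
  unfold qEcc weightedL2
  congr 1
  calc ∑ p, blockMass μX P p * ∑ x, dist (P.rep p) x ^ 2 * blockMeasure μX P p x
      = ∑ p, ∑ x, if P.part x = p then μX x * dist x (P.rep (P.part x)) ^ 2 else 0 := by
        refine Finset.sum_congr rfl fun p _ => ?_
        rw [mul_sum]
        refine Finset.sum_congr rfl fun x _ => ?_
        unfold blockMeasure
        split_ifs with h
        · subst h
          rw [blockMass_eq_mapMeasure, dist_comm]
          linear_combination dist x (P.rep (P.part x)) ^ 2 *
            div_mapMeasure_mul_mapMeasure (f := P.part) hμ x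
        · simp
    _ = ∑ x, μX x * dist x (P.rep (P.part x)) ^ 2 := by
        rw [sum_comm]
        simp

lemma weightedL2_dist_sub_dist_le (hμ : IsProb μX) (π : X → X) :
    weightedL2 (fun p : X × X => μX p.1 * μX p.2)
        (fun p => dist p.1 p.2 - dist (π p.1) (π p.2)) ≤
      2 * weightedL2 μX (fun x => dist x (π x)) := by
  set W : X × X → ℝ := fun p => μX p.1 * μX p.2
  set e : X → ℝ := fun x => dist x (π x)
  have hW : ∀ p, 0 ≤ W p := fun p => mul_nonneg (hμ.1 _) (hμ.1 _)
  have hfst : ∀ x, ∑ x', W (x, x') = μX x := fun x => by simp only [W, ← mul_sum, hμ.2, mul_one]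
  have hsnd : ∀ x', ∑ x, W (x, x') = μX x' := fun x' => by simp only [W, ← sum_mul, hμ.2, one_mul]
  calc _ ≤ weightedL2 W ((fun p => e p.1) + fun p => e p.2) :=
      weightedL2_le_of_abs_le hW fun p => by
        simpa [e, Real.dist_eq] using dist_dist_dist_le p.1 p.2 (π p.1) (π p.2)
    _ ≤ weightedL2 W (fun p => e p.1) + weightedL2 W (fun p => e p.2) := weightedL2_add_le hW _ _
    _ = 2 * weightedL2 μX e := by
      rw [weightedL2_comp_fst hfst, weightedL2_comp_snd hsnd, two_mul]

end Eccentricity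

lemma abs_dGW_sub_dGW_quantized_le {X Y : Type*} [Fintype X] [Fintype Y]
    [PseudoMetricSpace X] [PseudoMetricSpace Y] {μX : X → ℝ} {μY : Y → ℝ} {m : ℕ}
    (hμX : IsProb μX) (hμY : IsProb μY) (PX : PointedPartition X m) (PY : PointedPartition Y m) :
    |dGW (fun x x' => dist x x') (fun y y' => dist y y') μX μY -
        dGW (fun p q => dist (PX.rep p) (PX.rep q)) (fun p q => dist (PY.rep p) (PY.rep q))
          (blockMass μX PX) (blockMass μY PY)| ≤
      2 * (qEcc (fun x x' => dist x x') μX PX + qEcc (fun y y' => dist y y') μY PY) := by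
  have h := abs_dGW_sub_dGW_le hμX hμY (fun x x' => dist x x')
    (fun x x' => dist (PX.rep (PX.part x)) (PX.rep (PX.part x'))) (fun y y' => dist y y')
    (fun y y' => dist (PY.rep (PY.part y)) (PY.rep (PY.part y')))
  rw [dGW_comp_eq hμX.1 hμY.1 PX.part PY.part (fun p q => dist (PX.rep p) (PX.rep q))
    (fun p q => dist (PY.rep p) (PY.rep q))] at h
  rw [blockMass_eq_mapMeasure, blockMass_eq_mapMeasure, qEcc_eq_weightedL2 hμX.1,
    qEcc_eq_weightedL2 hμY.1, mul_add]
  exact h.trans (add_le_add (weightedL2_dist_sub_dist_le hμX fun x => PX.rep (PX.part x))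
    (weightedL2_dist_sub_dist_le hμY fun y => PY.rep (PY.part y)))

lemma sInf_le_mul_sInf_add_sInf {α β : Type*} {F : α → β → ℝ} {u : α → ℝ} {v : β → ℝ} {c : ℝ}
    (hc : 0 ≤ c) (hF : ∀ a b, 0 ≤ F a b) (hu : ∀ a, 0 ≤ u a) (hv : ∀ b, 0 ≤ v b)
    (h : ∀ a b, F a b ≤ c * (u a + v b)) :
    sInf {r | ∃ a b, r = F a b} ≤ c * (sInf {r | ∃ a, r = u a} + sInf {r | ∃ b, r = v b}) := by
  have hu' : {r | ∃ a, r = u a} = Set.range u := by ext; simp [eq_comm]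
  have hv' : {r | ∃ b, r = v b} = Set.range v := by ext; simp [eq_comm]
  rw [hu', hv', ← iInf, ← iInf]
  obtain hS | ⟨_, a₀, b₀, -⟩ := Set.eq_empty_or_nonempty {r | ∃ a b, r = F a b}
  · rw [hS, Real.sInf_empty]
    exact mul_nonneg hc (add_nonneg (Real.iInf_nonneg hu) (Real.iInf_nonneg hv))
  have : Nonempty α := ⟨a₀⟩
  have : Nonempty β := ⟨b₀⟩
  rw [mul_add, Real.mul_iInf_of_nonneg hc, Real.mul_iInf_of_nonneg hc]
  have hbdd : BddBelow {r | ∃ a b, r = F a b} := ⟨0, by rintro r ⟨a, b, rfl⟩; exact hF a b⟩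
  exact le_ciInf_add_ciInf fun a b =>
    (csInf_le hbdd ⟨a, b, rfl⟩).trans ((h a b).trans_eq (mul_add _ _ _))

theorem min_abs_dGW_diff_le_two_qEccMin_general
    {X Y : Type*} [Fintype X] [Fintype Y] [MetricSpace X] [MetricSpace Y]
    (μX : X → ℝ) (μY : Y → ℝ) (hμX : IsProb μX) (hμY : IsProb μY)
    (m : ℕ) :
    sInf {r : ℝ | ∃ (PX : PointedPartition X m) (PY : PointedPartition Y m),
        r = |dGW (fun x x' => dist x x') (fun y y' => dist y y') μX μY -
          dGW (fun p q => dist (PX.rep p) (PX.rep q))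
            (fun p q => dist (PY.rep p) (PY.rep q))
            (blockMass μX PX) (blockMass μY PY)|} ≤
      2 * (qEccMin X (fun x x' => dist x x') μX m +
        qEccMin Y (fun y y' => dist y y') μY m) :=
  sInf_le_mul_sInf_add_sInf zero_le_two (fun _ _ => abs_nonneg _) (fun _ => Real.sqrt_nonneg _)
    (fun _ => Real.sqrt_nonneg _) (abs_dGW_sub_dGW_quantized_le hμX hμY)

/-- `min_{P_X,P_Y} |d_GW(X,Y) − d_GW(Xᵐ,Yᵐ)| ≤ 2 (q_m(X) + q_m(Y))`. -/
theorem min_abs_dGW_diff_le_two_qEccMin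
    {X Y : Type*} [Fintype X] [Fintype Y] [MetricSpace X] [MetricSpace Y]
    (μX : X → ℝ) (μY : Y → ℝ) (hμX : IsProb μX) (hμY : IsProb μY)
    (m : ℕ) (hm : 1 ≤ m) (hmX : m ≤ Fintype.card X) (hmY : m ≤ Fintype.card Y) :
    sInf {r : ℝ | ∃ (PX : PointedPartition X m) (PY : PointedPartition Y m),
        r = |dGW (fun x x' => dist x x') (fun y y' => dist y y') μX μY -
          dGW (fun p q => dist (PX.rep p) (PX.rep q))
            (fun p q => dist (PY.rep p) (PY.rep q))
            (blockMass μX PX) (blockMass μY PY)|} ≤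
      2 * (qEccMin X (fun x x' => dist x x') μX m +
        qEccMin Y (fun y y' => dist y y') μY m) :=
  min_abs_dGW_diff_le_two_qEccMin_general μX μY hμX hμY m
end
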